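/- (Theorem 3) Consider any full binary tree whose leaves, read from left to right, are the indices 1,…,N. Label each leaf i with (top = i, M = m_i, C = c_i), and label each internal node u with left child v and right child w by the MERGE rule: M_u = max(M_v, C_v·M_w); top_u = top_v if M_v ≥ C_v·M_w and top_u = top_w otherwise; C_u = C_v·C_w. Then at the root, M_root = max_{1≤i≤N} f(i), and the index top_root attains this maximum, i.e. f(top_root) = max_{1≤i≤N} f(i), where f(i) = m_i · ∏_{j<i} c_j. -/

import Mathlib

/-- A full binary tree whose leaves carry natural-number indices: every internal node has
exactly two children. -/
inductive FullBinTree where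
  | leaf : ℕ → FullBinTree
  | node : FullBinTree → FullBinTree → FullBinTree

/-- The leaves of the tree, read from left to right. -/
def FullBinTree.leaves : FullBinTree → List ℕ
  | .leaf i => [i]
  | .node v w => v.leaves ++ w.leaves

/-- The labelling `(top, M, C)` of the nodes of a tree: a leaf `i` is labelled
`(i, m i, c i)`, and an internal node `u` with left child `v` and right child `w` is labelled
by the MERGE rule: `M_u = max M_v (C_v * M_w)`; `top_u = top_v` if `M_v ≥ C_v * M_w` and
`top_u = top_w` otherwise; `C_u = C_v * C_w`. -/
noncomputable def FullBinTree.label (m c : ℕ → ℝ) : FullBinTree → ℕ × ℝ × ℝ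
  | .leaf i => (i, m i, c i)
  | .node v w =>
      let lv := FullBinTree.label m c v
      let lw := FullBinTree.label m c w
      (if lv.2.2 * lw.2.1 ≤ lv.2.1 then lv.1 else lw.1,
        max lv.2.1 (lv.2.2 * lw.2.1),
        lv.2.2 * lw.2.2)

/-!
Induct over subtrees whose leaves form a block `a, …, a + n - 1`, measuring each leaf `i` of the
block by its rank-score renormalised to the block, `m i * ∏_{a ≤ j < i} c j`. Then `C` is the
product of `c` over the block, `top` lies in the block and attains `M`, and `M` bounds every
renormalised score. At a node, the scores of the right block relative to the whole block are its
own scores scaled by `C_v = ∏_{left block} c ≥ 0`; so the right block's maximum becomes `C_v * M_w`,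
and `max M_v (C_v * M_w)` is the maximum over the union, attained by the `top` MERGE selects.
-/

/-- The paper's rank-score `f` is `rankScore m c 1`; a subtree whose leaves are `a, …, a + n - 1`
ranks its leaves by `rankScore m c a`. -/
def rankScore (m c : ℕ → ℝ) (a i : ℕ) : ℝ := m i * ∏ j ∈ Finset.Ico a i, c j

lemma prod_Ico_mul_rankScore (m c : ℕ → ℝ) {a b i : ℕ} (hab : a ≤ b) (hbi : b ≤ i) :
    (∏ j ∈ Finset.Ico a b, c j) * rankScore m c b i = rankScore m c a i := by
  rw [rankScore, rankScore, mul_left_comm, Finset.prod_Ico_consecutive c hab hbi]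

namespace FullBinTree

variable (m c : ℕ → ℝ)

lemma label_node (v w : FullBinTree) :
    (node v w).label m c =
      (if (v.label m c).2.2 * (w.label m c).2.1 ≤ (v.label m c).2.1
        then (v.label m c).1 else (w.label m c).1,
       max (v.label m c).2.1 ((v.label m c).2.2 * (w.label m c).2.1),
       (v.label m c).2.2 * (w.label m c).2.2) := rfl

variable {m c}

lemma eq_and_eq_one_of_leaves_leaf_eq_range' {i a n : ℕ}
    (h : (leaf i).leaves = List.range' a n) : a = i ∧ n = 1 :=
  List.range'_eq_singleton_iff.mp h.symm

lemma exists_leaves_eq_range'_of_leaves_node {v w : FullBinTree} {a n : ℕ}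
    (h : (node v w).leaves = List.range' a n) :
    ∃ k ≤ n, v.leaves = List.range' a k ∧ w.leaves = List.range' (a + k) (n - k) := by
  obtain ⟨k, hk, hv, hw⟩ := List.range'_eq_append_iff.mp h.symm
  exact ⟨k, hk, hv, by simpa using hw⟩

lemma label_snd_snd_eq_prod {t : FullBinTree} {a n : ℕ} (ht : t.leaves = List.range' a n) :
    (t.label m c).2.2 = ∏ j ∈ Finset.Ico a (a + n), c j := by
  induction t generalizing a n with
  | leaf i =>
    obtain ⟨rfl, rfl⟩ := eq_and_eq_one_of_leaves_leaf_eq_range' ht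
    simp [label]
  | node v w ihv ihw =>
    obtain ⟨k, hk, hv, hw⟩ := exists_leaves_eq_range'_of_leaves_node ht
    rw [label_node, ihv hv, ihw hw, Finset.prod_Ico_consecutive c (by omega) (by omega),
      Nat.add_assoc, Nat.add_sub_cancel' hk]

lemma label_fst_mem_Ico {t : FullBinTree} {a n : ℕ} (ht : t.leaves = List.range' a n) :
    (t.label m c).1 ∈ Finset.Ico a (a + n) := by
  induction t generalizing a n with
  | leaf i =>
    obtain ⟨rfl, rfl⟩ := eq_and_eq_one_of_leaves_leaf_eq_range' ht
    simp [label]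
  | node v w ihv ihw =>
    obtain ⟨k, hk, hv, hw⟩ := exists_leaves_eq_range'_of_leaves_node ht
    have htop_v := Finset.mem_Ico.mp (ihv hv)
    have htop_w := Finset.mem_Ico.mp (ihw hw)
    rw [label_node, Finset.mem_Ico]
    split_ifs <;> omega

lemma rankScore_label_fst {t : FullBinTree} {a n : ℕ} (ht : t.leaves = List.range' a n) :
    rankScore m c a (t.label m c).1 = (t.label m c).2.1 := by
  induction t generalizing a n with
  | leaf i =>
    obtain ⟨rfl, rfl⟩ := eq_and_eq_one_of_leaves_leaf_eq_range' ht
    simp [label, rankScore]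
  | node v w ihv ihw =>
    obtain ⟨k, -, hv, hw⟩ := exists_leaves_eq_range'_of_leaves_node ht
    rw [label_node]
    split_ifs with hvw
    · rw [ihv hv, max_eq_left hvw]
    · rw [max_eq_right (le_of_not_ge hvw), ← ihw hw, label_snd_snd_eq_prod hv,
        prod_Ico_mul_rankScore m c (by omega) (Finset.mem_Ico.mp (label_fst_mem_Ico hw)).1]

lemma rankScore_le_label_snd_fst (hc : ∀ j, 0 ≤ c j) {t : FullBinTree} {a n : ℕ}
    (ht : t.leaves = List.range' a n) :
    ∀ i ∈ Finset.Ico a (a + n), rankScore m c a i ≤ (t.label m c).2.1 := by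
  induction t generalizing a n with
  | leaf i =>
    obtain ⟨rfl, rfl⟩ := eq_and_eq_one_of_leaves_leaf_eq_range' ht
    simp [label, rankScore]
  | node v w ihv ihw =>
    obtain ⟨k, hk, hv, hw⟩ := exists_leaves_eq_range'_of_leaves_node ht
    intro i hi
    rw [Finset.mem_Ico] at hi
    rw [label_node]
    rcases lt_or_ge i (a + k) with hik | hik
    · exact le_max_of_le_left (ihv hv i (Finset.mem_Ico.mpr ⟨hi.1, hik⟩))
    · refine le_max_of_le_right ?_
      rw [label_snd_snd_eq_prod hv, ← prod_Ico_mul_rankScore m c (by omega) hik]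
      exact mul_le_mul_of_nonneg_left (ihw hw i (Finset.mem_Ico.mpr ⟨hik, by omega⟩))
        (Finset.prod_nonneg fun j _ => hc j)

end FullBinTree

/-- Theorem 3: For any full binary tree whose leaves, read from left to right,
are `1, …, N`, labelled by the MERGE rule, the root satisfies `M_root = max_{1≤i≤N} f i` and
`f top_root = max_{1≤i≤N} f i`, where `f i = m i * ∏_{j<i} c j`. -/
theorem stmt_9 (N : ℕ) (hN : 1 ≤ N) (m c : ℕ → ℝ) (hc : ∀ j, 0 < c j)
    (t : FullBinTree) (ht : t.leaves = List.range' 1 N) :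
    (FullBinTree.label m c t).2.1
        = (Finset.Icc 1 N).sup' (Finset.nonempty_Icc.mpr hN)
            (fun i => m i * ∏ j ∈ Finset.Icc 1 (i - 1), c j) ∧
    m (FullBinTree.label m c t).1 *
        ∏ j ∈ Finset.Icc 1 ((FullBinTree.label m c t).1 - 1), c j
      = (Finset.Icc 1 N).sup' (Finset.nonempty_Icc.mpr hN)
          (fun i => m i * ∏ j ∈ Finset.Icc 1 (i - 1), c j) := by
  have hf : ∀ i, m i * ∏ j ∈ Finset.Icc 1 (i - 1), c j = rankScore m c 1 i := fun i => by
    have hIcc_pred : Finset.Icc 1 (i - 1) = Finset.Ico 1 i := by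
      ext j
      simp only [Finset.mem_Icc, Finset.mem_Ico]
      omega
    rw [rankScore, hIcc_pred]
  have hIcc : Finset.Icc 1 N = Finset.Ico 1 (1 + N) := by
    rw [Nat.add_comm, Finset.Ico_add_one_right_eq_Icc]
  have htop := FullBinTree.label_fst_mem_Ico (m := m) (c := c) ht
  have hscore := FullBinTree.rankScore_label_fst (m := m) (c := c) ht
  have hM : (FullBinTree.label m c t).2.1 = (Finset.Icc 1 N).sup' (Finset.nonempty_Icc.mpr hN)
      (fun i => m i * ∏ j ∈ Finset.Icc 1 (i - 1), c j) := by
    refine le_antisymm (Finset.le_sup'_of_le _ (hIcc ▸ htop) (by rw [hf, hscore]))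
      (Finset.sup'_le _ _ fun i hi => ?_)
    rw [hf]
    exact FullBinTree.rankScore_le_label_snd_fst (fun j => (hc j).le) ht i (hIcc ▸ hi)
  exact ⟨hM, by rw [hf, hscore, hM]⟩
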